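/- arXiv:2501.06261 — 4 statements merged into one kernel-verified Lean document; each statement's English description precedes it below -/
import Mathlib

section
/- For the purely quadratic utility function U_2(X_S) = (1/2)(X_S - X_D)ᵀ H (X_S - X_D), where H is a symmetric matrix and X_S = Σ_{j∈S} X_j with X_D = Σ_{j∈D} X_j, the Shapley value of player j equals -(1/2) X_Dᵀ H X_j. -/
open Finset Matrix

/-! Since `H` is symmetric, the marginal contribution of player `j` to a coalition `S ∌ j` is
affine in `S`: it equals `(½ X_jᵀ H X_j - X_jᵀ H X_D) + ∑_{i ∈ S} X_jᵀ H X_i`. The Shapley average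
of a constant is that constant, and that of an additive game `∑_{i ∈ S} g i` is half of
`∑_{i ≠ j} g i`: complementation among the other players pairs coalitions of equal weight, and
each pair sums to `∑_{i ≠ j} g i`. With `X_D = ∑_{i ≠ j} X_i + X_j` the value is `-½ X_Dᵀ H X_j`. -/

theorem Finset.sum_Icc_one_comp_sub_one {M : Type*} [AddCommMonoid M] (f : ℕ → M) (n : ℕ) :
    ∑ k ∈ Icc 1 n, f (k - 1) = ∑ k ∈ range n, f k := by
  rw [← Ico_add_one_right_eq_Icc, sum_Ico_eq_sum_range, add_tsub_cancel_right]
  simp only [add_tsub_cancel_left]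

theorem Finset.sum_powersetCard_sdiff {α M : Type*} [DecidableEq α] [AddCommMonoid M]
    (A : Finset α) {k : ℕ} (hk : k ≤ #A) (f : Finset α → M) :
    ∑ S ∈ A.powersetCard k, f (A \ S) = ∑ S ∈ A.powersetCard (#A - k), f S := by
  refine sum_nbij' (A \ ·) (A \ ·) ?_ ?_ ?_ ?_ fun _ _ => rfl
  all_goals intro S hS; simp only [mem_powersetCard] at hS ⊢
  · exact ⟨sdiff_subset, by rw [card_sdiff_of_subset hS.1, hS.2]⟩
  · exact ⟨sdiff_subset, by rw [card_sdiff_of_subset hS.1, hS.2]; omega⟩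
  · exact sdiff_sdiff_eq_self hS.1
  · exact sdiff_sdiff_eq_self hS.1

section Shapley

variable {α : Type*} [DecidableEq α]

theorem sum_inv_choose_mul_sum_powersetCard_sum (A : Finset α) (g : α → ℝ) :
    ∑ k ∈ range (#A + 1), ((#A).choose k : ℝ)⁻¹ * ∑ S ∈ A.powersetCard k, ∑ i ∈ S, g i
      = (#A + 1) / 2 * ∑ i ∈ A, g i := by
  set F : ℕ → ℝ := fun k => ((#A).choose k : ℝ)⁻¹ * ∑ S ∈ A.powersetCard k, ∑ i ∈ S, g i
  have hpair : ∀ k ∈ range (#A + 1), F (#A - k) + F k = ∑ i ∈ A, g i := by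
    intro k hk
    have hkA : k ≤ #A := Nat.lt_succ_iff.mp (mem_range.mp hk)
    have hC : ((#A).choose k : ℝ) ≠ 0 := Nat.cast_ne_zero.mpr (Nat.choose_pos hkA).ne'
    simp only [F, Nat.choose_symm hkA, ← sum_powersetCard_sdiff A hkA, ← mul_add,
      ← sum_add_distrib]
    rw [sum_congr rfl fun S hS => sum_sdiff (mem_powersetCard.mp hS).1, sum_const,
      card_powersetCard, nsmul_eq_mul, inv_mul_cancel_left₀ hC]
  have hreflect : ∑ k ∈ range (#A + 1), F (#A - k) = ∑ k ∈ range (#A + 1), F k := by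
    simpa using sum_range_reflect F (#A + 1)
  have hsum := sum_congr rfl hpair
  rw [sum_add_distrib, hreflect, sum_const, card_range, nsmul_eq_mul] at hsum
  push_cast at hsum
  linear_combination hsum / 2

theorem sum_inv_choose_mul_sum_powersetCard_of_affine (A : Finset α) (Δ : Finset α → ℝ) (c : ℝ)
    (g : α → ℝ) (hΔ : ∀ S ⊆ A, Δ S = c + ∑ i ∈ S, g i) :
    1 / (#A + 1 : ℝ) * ∑ k ∈ range (#A + 1), ((#A).choose k : ℝ)⁻¹ * ∑ S ∈ A.powersetCard k, Δ S
      = c + 1 / 2 * ∑ i ∈ A, g i := by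
  have hterm : ∀ k ∈ range (#A + 1), ((#A).choose k : ℝ)⁻¹ * ∑ S ∈ A.powersetCard k, Δ S
      = c + ((#A).choose k : ℝ)⁻¹ * ∑ S ∈ A.powersetCard k, ∑ i ∈ S, g i := by
    intro k hk
    have hC : ((#A).choose k : ℝ) ≠ 0 :=
      Nat.cast_ne_zero.mpr (Nat.choose_pos (Nat.lt_succ_iff.mp (mem_range.mp hk))).ne'
    rw [sum_congr rfl fun S hS => hΔ S (mem_powersetCard.mp hS).1, sum_add_distrib, sum_const,
      card_powersetCard, nsmul_eq_mul, mul_add, inv_mul_cancel_left₀ hC]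
  rw [sum_congr rfl hterm, sum_add_distrib, sum_inv_choose_mul_sum_powersetCard_sum, sum_const,
    card_range, nsmul_eq_mul]
  field_simp
  push_cast
  ring

end Shapley

theorem Matrix.IsSymm.dotProduct_mulVec_comm {n R : Type*} [Fintype n] [CommSemiring R]
    {H : Matrix n n R} (hH : H.IsSymm) (u v : n → R) : u ⬝ᵥ H *ᵥ v = v ⬝ᵥ H *ᵥ u := by
  rw [dotProduct_mulVec, ← mulVec_transpose, hH.eq, dotProduct_comm]

theorem Matrix.IsSymm.dotProduct_mulVec_add_sub {n R : Type*} [Fintype n] [CommRing R]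
    {H : Matrix n n R} (hH : H.IsSymm) (x a : n → R) :
    (x + a) ⬝ᵥ H *ᵥ (x + a) - x ⬝ᵥ H *ᵥ x = a ⬝ᵥ H *ᵥ a + 2 * (a ⬝ᵥ H *ᵥ x) := by
  rw [mulVec_add, add_dotProduct, dotProduct_add, dotProduct_add, hH.dotProduct_mulVec_comm x a]
  ring

/-- For the purely quadratic utility
`U₂ x = (1/2) (x - X_D)ᵀ H (x - X_D)` with `H` symmetric, the Shapley value of
player `j` equals `-(1/2) X_Dᵀ H X_j`. -/
theorem shapley_quadratic_utility (d m : ℕ) (hd : 0 < d)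
    (X : Fin d → Fin m → ℝ) (H : Matrix (Fin m) (Fin m) ℝ) (hH : H.IsSymm)
    (U : (Fin m → ℝ) → ℝ)
    (hU : ∀ x, U x = (1 / 2) * ((x - ∑ i, X i) ⬝ᵥ H.mulVec (x - ∑ i, X i)))
    (j : Fin d) :
    (1 / (d : ℝ)) * ∑ k ∈ Finset.Icc 1 d,
        (((d - 1).choose (k - 1) : ℝ))⁻¹ *
          ∑ S ∈ (Finset.univ.erase j).powersetCard (k - 1),
            (U (∑ i ∈ insert j S, X i) - U (∑ i ∈ S, X i))
      = -(1 / 2) * ((∑ i, X i) ⬝ᵥ H.mulVec (X j)) := by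
  set T := ∑ i, X i
  have hmarg : ∀ S ⊆ univ.erase j, U (∑ i ∈ insert j S, X i) - U (∑ i ∈ S, X i)
      = (1 / 2 * (X j ⬝ᵥ H *ᵥ X j) - X j ⬝ᵥ H *ᵥ T) + ∑ i ∈ S, X j ⬝ᵥ H *ᵥ X i := by
    intro S hS
    have hjS : j ∉ S := fun h => notMem_erase j univ (hS h)
    rw [sum_insert hjS, add_comm (X j), hU, hU, add_sub_right_comm, ← mul_sub,
      hH.dotProduct_mulVec_add_sub, mulVec_sub, dotProduct_sub, mulVec_sum, dotProduct_sum]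
    ring
  have hrest : ∑ i ∈ univ.erase j, X j ⬝ᵥ H *ᵥ X i = X j ⬝ᵥ H *ᵥ T - X j ⬝ᵥ H *ᵥ X j := by
    rw [sum_erase_eq_sub (mem_univ j), ← dotProduct_sum, ← mulVec_sum]
  have hA : #(univ.erase j) = d - 1 := by simp
  have hshapley := sum_inv_choose_mul_sum_powersetCard_of_affine _ _ _ _ hmarg
  rw [hrest, hA, Nat.sub_add_cancel hd, Nat.cast_pred hd, sub_add_cancel,
    ← sum_Icc_one_comp_sub_one] at hshapley
  rw [hshapley, hH.dotProduct_mulVec_comm T]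
  ring
end

section
/- For the second-order utility U(X_S) = U(X_D) + G·(X_S - X_D) + (1/2)(X_S - X_D)ᵀ H (X_S - X_D), the Shapley value of player j equals G·X_j - (1/2) X_Dᵀ H X_j. -/
/-!
The marginal contribution of `j` to a coalition `S ⊆ D \ {j}` is affine in the indicator of `S`:
with `v = H X_j` it equals `c + ∑_{i ∈ S} X_i ⬝ v`, where `c = G ⬝ X_j + ½ X_j ⬝ v - X_D ⬝ v`.
The Shapley weights average the constant `c` to itself, and each `X_i ⬝ v`, `i ≠ j`, enters a
uniformly random coalition of uniformly random size `r ∈ {0, …, d - 1}` with probability `r / (d - 1)`,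
that is with overall probability `1 / 2`. Hence the Shapley value is `c + ½ (X_D - X_j) ⬝ v`.
-/

open Finset Matrix

section Coalitions

variable {α : Type*} [DecidableEq α]

theorem sum_powersetCard_sum_eq_choose_smul {M : Type*} [AddCommMonoid M]
    (s : Finset α) {r : ℕ} (hr : 0 < r) (f : α → M) :
    ∑ S ∈ s.powersetCard r, ∑ i ∈ S, f i = (#s - 1).choose (r - 1) • ∑ i ∈ s, f i := by
  rw [sum_comm' (t' := s) (s' := fun i => {S ∈ s.powersetCard r | {i} ⊆ S}), smul_sum]
  · refine sum_congr rfl fun i hi => ?_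
    rw [sum_const, card_filter_powersetCard_subset _ _ _ (singleton_subset_iff.2 hi)
      (by rwa [card_singleton]), card_singleton]
  · intro S i
    simp only [mem_filter, mem_powersetCard, singleton_subset_iff]
    grind

theorem sum_powersetCard_sum_eq_choose_mul {K : Type*} [Field K] [CharZero K]
    (s : Finset α) (r : ℕ) (f : α → K) :
    ∑ S ∈ s.powersetCard r, ∑ i ∈ S, f i = (#s).choose r * (r / #s) * ∑ i ∈ s, f i := by
  cases r with
  | zero => simp
  | succ k =>
    rw [sum_powersetCard_sum_eq_choose_smul s k.succ_pos, nsmul_eq_mul]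
    rcases s.eq_empty_or_nonempty with rfl | hs
    · simp
    obtain ⟨n, hn⟩ : ∃ n, #s = n + 1 := ⟨#s - 1, by have := hs.card_pos; omega⟩
    have hchoose : ((n + 1 : ℕ) : K) * n.choose k = (n + 1).choose (k + 1) * (k + 1 : ℕ) := by
      exact_mod_cast Nat.add_one_mul_choose_eq n k
    rw [hn, Nat.add_sub_cancel, Nat.succ_sub_one]
    field_simp
    push_cast at hchoose ⊢
    linear_combination (∑ i ∈ s, f i) * hchoose

theorem sum_inv_choose_mul_sum_powersetCard_const_add_sum {K : Type*} [Field K] [CharZero K]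
    (s : Finset α) (c : K) (w : α → K) :
    ∑ r ∈ range (#s + 1), ((#s).choose r : K)⁻¹ * ∑ S ∈ s.powersetCard r, (c + ∑ i ∈ S, w i)
      = (#s + 1) * (c + (∑ i ∈ s, w i) / 2) := by
  have hterm : ∀ r ∈ range (#s + 1), ((#s).choose r : K)⁻¹ *
      ∑ S ∈ s.powersetCard r, (c + ∑ i ∈ S, w i) = c + r / #s * ∑ i ∈ s, w i := by
    intro r hr
    have hchoose : ((#s).choose r : K) ≠ 0 :=
      Nat.cast_ne_zero.2 (Nat.choose_pos (Nat.lt_succ_iff.1 (mem_range.1 hr))).ne'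
    rw [sum_add_distrib, sum_const, card_powersetCard, nsmul_eq_mul,
      sum_powersetCard_sum_eq_choose_mul]
    field_simp
  rw [sum_congr rfl hterm, sum_add_distrib, sum_const, card_range, nsmul_eq_mul, ← sum_mul,
    ← sum_div]
  rcases s.eq_empty_or_nonempty with rfl | hs
  · simp
  have hgauss : ∑ r ∈ range (#s + 1), (r : K) = (#s + 1) * #s / 2 := by
    have := congrArg (Nat.cast : ℕ → K) (sum_range_id_mul_two (#s + 1))
    push_cast [Nat.add_sub_cancel] at this
    rw [eq_div_iff two_ne_zero, this]
  have hs0 : (#s : K) ≠ 0 := Nat.cast_ne_zero.2 hs.card_pos.ne'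
  rw [hgauss]
  field_simp
  push_cast
  ring

end Coalitions

section SecondOrder

variable {m : Type*} [Fintype m]

theorem Matrix.IsSymm.add_dotProduct_mulVec_add {R : Type*} [CommRing R] {H : Matrix m m R}
    (hH : H.IsSymm) (x y : m → R) :
    (x + y) ⬝ᵥ H *ᵥ (x + y) = x ⬝ᵥ H *ᵥ x + 2 * (x ⬝ᵥ H *ᵥ y) + y ⬝ᵥ H *ᵥ y := by
  have hcomm : y ⬝ᵥ H *ᵥ x = x ⬝ᵥ H *ᵥ y := by
    rw [← dotProduct_transpose_mulVec, hH.eq]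
  rw [mulVec_add, dotProduct_add, add_dotProduct, add_dotProduct, hcomm]
  ring

theorem add_sub_eq_of_second_order {K : Type*} [Field K] [CharZero K] {H : Matrix m m K}
    (hH : H.IsSymm) {U : (m → K) → K} {G x₀ : m → K}
    (hU : ∀ x, U x = U x₀ + G ⬝ᵥ (x - x₀) + (1 / 2) * ((x - x₀) ⬝ᵥ H *ᵥ (x - x₀)))
    (x y : m → K) :
    U (y + x) - U x = G ⬝ᵥ y + (1 / 2) * (y ⬝ᵥ H *ᵥ y) + (x - x₀) ⬝ᵥ H *ᵥ y := by
  rw [hU (y + x), hU x, show y + x - x₀ = (x - x₀) + y by abel,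
    hH.add_dotProduct_mulVec_add, dotProduct_add]
  ring

end SecondOrder

theorem shapley_second_order_utility_general (d m : ℕ)
    (X : Fin d → Fin m → ℝ) (G : Fin m → ℝ)
    (H : Matrix (Fin m) (Fin m) ℝ) (hH : H.IsSymm)
    (U : (Fin m → ℝ) → ℝ)
    (hU : ∀ x, U x = U (∑ i, X i) + G ⬝ᵥ (x - ∑ i, X i)
        + (1 / 2) * ((x - ∑ i, X i) ⬝ᵥ H.mulVec (x - ∑ i, X i)))
    (j : Fin d) :
    (1 / (d : ℝ)) * ∑ k ∈ Finset.Icc 1 d,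
        (((d - 1).choose (k - 1) : ℝ))⁻¹ *
          ∑ S ∈ (Finset.univ.erase j).powersetCard (k - 1),
            (U (∑ i ∈ insert j S, X i) - U (∑ i ∈ S, X i))
      = G ⬝ᵥ X j - (1 / 2) * ((∑ i, X i) ⬝ᵥ H.mulVec (X j)) := by
  obtain ⟨n, rfl⟩ : ∃ n, d = n + 1 := ⟨d - 1, by have := j.pos; omega⟩
  set v := H *ᵥ X j
  set c := G ⬝ᵥ X j + (1 / 2) * (X j ⬝ᵥ v) - (∑ i, X i) ⬝ᵥ v with hc
  have hmarginal : ∀ r, ∀ S ∈ (univ.erase j).powersetCard r,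
      U (∑ i ∈ insert j S, X i) - U (∑ i ∈ S, X i) = c + ∑ i ∈ S, X i ⬝ᵥ v := by
    intro r S hS
    have hjS : j ∉ S := fun h => (mem_erase.1 ((mem_powersetCard.1 hS).1 h)).1 rfl
    rw [sum_insert hjS, add_sub_eq_of_second_order hH hU, sub_dotProduct, sum_dotProduct]
    ring
  have hrest : ∑ i ∈ univ.erase j, X i ⬝ᵥ v = (∑ i, X i) ⬝ᵥ v - X j ⬝ᵥ v := by
    rw [sum_dotProduct, ← add_sum_erase _ _ (mem_univ j)]
    ring
  have hshapley := sum_inv_choose_mul_sum_powersetCard_const_add_sum (univ.erase j) c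
    (fun i => X i ⬝ᵥ v)
  rw [card_erase_of_mem (mem_univ j), card_univ, Fintype.card_fin, Nat.add_sub_cancel] at hshapley
  simp only [← Ico_add_one_right_eq_Icc, sum_Ico_eq_sum_range, add_tsub_cancel_left,
    Nat.add_sub_cancel]
  rw [sum_congr rfl fun r _ => congrArg _ (sum_congr rfl (hmarginal r)), hshapley, hrest, hc]
  push_cast
  field_simp
  ring

/-- For the second-order utility
`U x = U X_D + G ⬝ (x - X_D) + (1/2)(x - X_D)ᵀ H (x - X_D)` with `H` symmetric,
the Shapley value of player `j` equals `G ⬝ X_j - (1/2) X_Dᵀ H X_j`. -/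
theorem shapley_second_order_utility (d m : ℕ) (hd : 0 < d)
    (X : Fin d → Fin m → ℝ) (G : Fin m → ℝ)
    (H : Matrix (Fin m) (Fin m) ℝ) (hH : H.IsSymm)
    (U : (Fin m → ℝ) → ℝ)
    (hU : ∀ x, U x = U (∑ i, X i) + G ⬝ᵥ (x - ∑ i, X i)
        + (1 / 2) * ((x - ∑ i, X i) ⬝ᵥ H.mulVec (x - ∑ i, X i)))
    (j : Fin d) :
    (1 / (d : ℝ)) * ∑ k ∈ Finset.Icc 1 d,
        (((d - 1).choose (k - 1) : ℝ))⁻¹ *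
          ∑ S ∈ (Finset.univ.erase j).powersetCard (k - 1),
            (U (∑ i ∈ insert j S, X i) - U (∑ i ∈ S, X i))
      = G ⬝ᵥ X j - (1 / 2) * ((∑ i, X i) ⬝ᵥ H.mulVec (X j)) :=
  shapley_second_order_utility_general d m X G H hH U hU j
end

section
/- GradCAM's post-softmax heatmap is an ensemble of pre-softmax heatmaps: if E_c^pre = (1/N) Σ_{i=1}^{N} g(∂y^c/∂A^i) ⊙ A^i and E_c^post = (1/N) Σ_{i=1}^{N} g(∂p^c/∂A^i) ⊙ A^i, where p = softmax(y) and g is any linear map on ℝ^d, then E_c^post = p^c Σ_{k≠c} p^k (E_c^pre - E_k^pre). -/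
open Finset

/-- GradCAM's post-softmax heatmap is an ensemble of pre-softmax
heatmaps: `E_c^post = p^c ∑_{k≠c} p^k (E_c^pre - E_k^pre)`, where the gradients
of `p^c` w.r.t. the activation maps are given by the softmax Jacobian and the
chain rule, and `g` is any linear map on `ℝ^d`. -/
theorem gradcam_post_softmax_ensemble {C N d : ℕ}
    (A : Fin N → Fin d → ℝ) (p : Fin C → ℝ) (hp : ∑ k, p k = 1)
    (dy : Fin C → Fin N → Fin d → ℝ) (dp : Fin C → Fin N → Fin d → ℝ)
    (hchain : ∀ c i, dp c i = (p c * (1 - p c)) • dy c i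
        - ∑ k ∈ Finset.univ.erase c, (p c * p k) • dy k i)
    (g : (Fin d → ℝ) →ₗ[ℝ] (Fin d → ℝ)) (c : Fin C)
    (Epre : Fin C → Fin d → ℝ) (Epost : Fin d → ℝ)
    (hEpre : ∀ k, Epre k = (1 / (N : ℝ)) • ∑ i, g (dy k i) * A i)
    (hEpost : Epost = (1 / (N : ℝ)) • ∑ i, g (dp c i) * A i) :
    Epost = p c • ∑ k ∈ Finset.univ.erase c, p k • (Epre c - Epre k) := by
  have hpc : 1 - p c = ∑ k ∈ Finset.univ.erase c, p k := by
    rw [Finset.sum_erase_eq_sub (mem_univ c), hp]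
  have h1 : ∀ i : Fin N, dp c i = ∑ k ∈ Finset.univ.erase c, (p c * p k) • (dy c i - dy k i) := by
    intro i
    rw [hchain, hpc, Finset.mul_sum, Finset.sum_smul, ← Finset.sum_sub_distrib]
    exact Finset.sum_congr rfl fun k _ => by rw [smul_sub]
  simp only [hEpost, hEpre, h1, map_sum, map_smul, map_sub]
  funext x
  simp only [Pi.smul_apply, Finset.sum_apply, Pi.mul_apply, Pi.sub_apply, smul_eq_mul,
    Finset.sum_mul, Finset.mul_sum]
  rw [Finset.sum_comm]
  refine Finset.sum_congr rfl fun k _ => ?_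
  rw [← Finset.sum_sub_distrib, Finset.mul_sum, Finset.mul_sum]
  refine Finset.sum_congr rfl fun i _ => ?_
  ring
end

section
/- For the ReST utility U_ReST = y^c + ln(softmax(y)^c), the GradCAM heatmap (before ReLU) satisfies E_c^ReST = E_c^pre + Σ_{k≠c} p^k (E_c^pre - E_k^pre), where E_k^pre are the pre-softmax GradCAM heatmaps and p = softmax(y). -/
open Finset

/-! With `∑ k, p k = 1` the coefficient `1 - p c` splits as `∑_{k ≠ c} p k`, so the chain-rule
gradient of the ReST utility is `∂y^c/∂A^i + ∑_{k ≠ c} p k (∂y^c/∂A^i - ∂y^k/∂A^i)`. The GradCAM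
heatmap is linear in the gradient, and applying it termwise gives the formula. -/

theorem smul_sub_sum_erase_eq_sum_erase_smul_sub {ι R M : Type*} [Fintype ι] [DecidableEq ι]
    [Ring R] [AddCommGroup M] [Module R M] {p : ι → R} (hp : ∑ k, p k = 1) (c : ι) (x : M)
    (v : ι → M) :
    (1 - p c) • x - ∑ k ∈ univ.erase c, p k • v k = ∑ k ∈ univ.erase c, p k • (x - v k) := by
  have hpc : ∑ k ∈ univ.erase c, p k = 1 - p c := by
    rw [← hp, ← add_sum_erase univ p (mem_univ c), add_sub_cancel_left]
  simp only [smul_sub, sum_sub_distrib, ← sum_smul, hpc]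

/-- The product of the algebra `E` plays the role of the Hadamard product `⊙`
(pointwise on `Fin d → ℝ`). -/
def gradCAM {𝕜 E : Type*} [Field 𝕜] [Ring E] [Algebra 𝕜 E] {N : ℕ} (g : E →ₗ[𝕜] E)
    (A : Fin N → E) : (Fin N → E) →ₗ[𝕜] E where
  toFun G := (1 / (N : 𝕜)) • ∑ i, g (G i) * A i
  map_add' G H := by
    simp only [Pi.add_apply, map_add, add_mul, sum_add_distrib, smul_add]
  map_smul' a G := by
    simp only [Pi.smul_apply, map_smul, smul_mul_assoc, ← smul_sum, RingHom.id_apply,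
      smul_comm a]

/-- For the ReST utility `U_ReST = y^c + ln(softmax(y)^c)` whose
gradient w.r.t. each activation map is (by the chain rule, using
`∂ln p^c/∂y^c = 1 - p^c` and `∂ln p^c/∂y^k = -p^k` for `k ≠ c`)
`∂U_ReST/∂A^i = ∂y^c/∂A^i + (1 - p^c) ∂y^c/∂A^i - ∑_{k≠c} p^k ∂y^k/∂A^i`,
the GradCAM heatmap before ReLU satisfies
`E_c^ReST = E_c^pre + ∑_{k≠c} p^k (E_c^pre - E_k^pre)`. -/
theorem gradcam_rest_heatmap {C N d : ℕ}
    (A : Fin N → Fin d → ℝ) (p : Fin C → ℝ) (hp : ∑ k, p k = 1)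
    (dy : Fin C → Fin N → Fin d → ℝ) (c : Fin C) (dU : Fin N → Fin d → ℝ)
    (hchain : ∀ i, dU i = dy c i + ((1 - p c) • dy c i
        - ∑ k ∈ Finset.univ.erase c, p k • dy k i))
    (g : (Fin d → ℝ) →ₗ[ℝ] (Fin d → ℝ))
    (Epre : Fin C → Fin d → ℝ) (EReST : Fin d → ℝ)
    (hEpre : ∀ k, Epre k = (1 / (N : ℝ)) • ∑ i, g (dy k i) * A i)
    (hEReST : EReST = (1 / (N : ℝ)) • ∑ i, g (dU i) * A i) :
    EReST = Epre c + ∑ k ∈ Finset.univ.erase c, p k • (Epre c - Epre k) := by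
  have hdU : dU = dy c + ∑ k ∈ univ.erase c, p k • (dy c - dy k) := by
    funext i
    rw [hchain, smul_sub_sum_erase_eq_sum_erase_smul_sub hp]
    simp only [Pi.add_apply, Finset.sum_apply, Pi.smul_apply, Pi.sub_apply]
  have hEpre' : ∀ k, Epre k = gradCAM g A (dy k) := hEpre
  have hEReST' : EReST = gradCAM g A dU := hEReST
  simp only [hEReST', hEpre', hdU, map_add, map_sum, map_smul, map_sub]
end
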